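/- arXiv:1308.5435 — 2 statements merged into one kernel-verified Lean document; each statement's English description precedes it below -/
import Mathlib

section
/- Let S be a commutative ring and 𝔞 an ideal of S such that S is 𝔞-adically complete, and fix an integer n ≥ 1. Let F ∈ S⟦x⟧ have zero constant term and satisfy property (*) with respect to 𝔞 and n, and let φ ∈ S⟦x⟧ have zero constant term and unit linear coefficient. Then the pre-composition F∘φ satisfies property (*) with respect to 𝔞 and n: its coefficients in degrees 1 ≤ m < n lie in 𝔞 and its degree-n coefficient is a unit of S. -/
open PowerSeries

/-!
Below degree `n` every term `aᵢ · [xᵐ] φⁱ` of the coefficient of `xᵐ` in `F ∘ φ` has `aᵢ ∈ 𝔞`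
(`a₀ = 0`). In degree `n` the same holds for all terms but the last, `aₙ · [xⁿ] φⁿ = aₙ · φ₁ⁿ`,
which is a unit; since `𝔞` lies in the Jacobson radical of the `𝔞`-adically complete ring `S`,
a unit plus an element of `𝔞` is a unit.
-/

/-- Substitution of the power series `g` (with zero constant term) into the power
series `f`, i.e. the composite `f ∘ g`. -/
noncomputable def PowerSeries.substComp {S : Type*} [CommRing S]
    (g f : PowerSeries S) : PowerSeries S :=
  PowerSeries.mk fun n =>
    ∑ i ∈ Finset.range (n + 1), PowerSeries.coeff i f * PowerSeries.coeff n (g ^ i)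

theorem Ideal.isUnit_add_of_mem_jacobson_bot {R : Type*} [CommRing R] {s u : R}
    (hs : s ∈ (⊥ : Ideal R).jacobson) (hu : IsUnit u) : IsUnit (s + u) := by
  obtain ⟨u, rfl⟩ := hu
  refine (Units.isUnit_units_mul u⁻¹ _).mp (Ideal.isUnit_of_sub_one_mem_jacobson_bot _ ?_)
  rw [mul_add, Units.inv_mul, add_sub_cancel_right]
  exact Ideal.mul_mem_left _ _ hs

namespace PowerSeries

variable {R : Type*} [CommRing R]

theorem coeff_pow_self_of_constantCoeff_eq_zero {φ : R⟦X⟧} (hφ : constantCoeff φ = 0) (n : ℕ) :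
    coeff n (φ ^ n) = coeff 1 φ ^ n := by
  obtain ⟨ψ, rfl⟩ := X_dvd_iff.mpr hφ
  simpa [mul_pow, coeff_succ_X_mul] using coeff_X_pow_mul (ψ ^ n) n 0

theorem coeff_substComp (g f : R⟦X⟧) (n : ℕ) :
    coeff n (substComp g f) = ∑ i ∈ Finset.range (n + 1), coeff i f * coeff n (g ^ i) :=
  coeff_mk _ _

theorem sum_range_coeff_mul_mem {𝔞 : Ideal R} {f : R⟦X⟧} {k : ℕ}
    (hf : ∀ i < k, coeff i f ∈ 𝔞) (c : ℕ → R) :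
    ∑ i ∈ Finset.range k, coeff i f * c i ∈ 𝔞 :=
  Ideal.sum_mem _ fun i hi => Ideal.mul_mem_right _ _ (hf i (Finset.mem_range.mp hi))

end PowerSeries

theorem precomp_preserves_star_general {S : Type*} [CommRing S] (𝔞 : Ideal S)
    [IsAdicComplete 𝔞 S] (n : ℕ)
    (F φ : PowerSeries S)
    (hF0 : PowerSeries.constantCoeff F = 0)
    (hFlow : ∀ i, 1 ≤ i → i < n → PowerSeries.coeff i F ∈ 𝔞)
    (hFn : IsUnit (PowerSeries.coeff n F))
    (hφ0 : PowerSeries.constantCoeff φ = 0)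
    (hφ1 : IsUnit (PowerSeries.coeff 1 φ)) :
    (∀ m, 1 ≤ m → m < n →
        PowerSeries.coeff m (PowerSeries.substComp φ F) ∈ 𝔞) ∧
      IsUnit (PowerSeries.coeff n (PowerSeries.substComp φ F)) := by
  have hlow : ∀ i < n, coeff i F ∈ 𝔞 := fun i hi => by
    rcases i.eq_zero_or_pos with rfl | hi0
    · simp [hF0]
    · exact hFlow i hi0 hi
  refine ⟨fun m _ hm => ?_, ?_⟩
  · rw [coeff_substComp]
    exact sum_range_coeff_mul_mem (fun i hi => hlow i (by omega)) _
  · rw [coeff_substComp, Finset.sum_range_succ, coeff_pow_self_of_constantCoeff_eq_zero hφ0]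
    exact Ideal.isUnit_add_of_mem_jacobson_bot
      (IsAdicComplete.le_jacobson_bot 𝔞 (sum_range_coeff_mul_mem hlow _)) (hFn.mul (hφ1.pow n))

/-- Pre-composition step of Lemma 3.2: if `F` satisfies property (*) with respect
to `𝔞` and `n`, and `φ` has zero constant term and unit linear coefficient, then
`F ∘ φ` satisfies property (*). -/
theorem precomp_preserves_star {S : Type*} [CommRing S] (𝔞 : Ideal S)
    [IsAdicComplete 𝔞 S] (n : ℕ) (hn : 1 ≤ n)
    (F φ : PowerSeries S)
    (hF0 : PowerSeries.constantCoeff F = 0)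
    (hFlow : ∀ i, 1 ≤ i → i < n → PowerSeries.coeff i F ∈ 𝔞)
    (hFn : IsUnit (PowerSeries.coeff n F))
    (hφ0 : PowerSeries.constantCoeff φ = 0)
    (hφ1 : IsUnit (PowerSeries.coeff 1 φ)) :
    (∀ m, 1 ≤ m → m < n →
        PowerSeries.coeff m (PowerSeries.substComp φ F) ∈ 𝔞) ∧
      IsUnit (PowerSeries.coeff n (PowerSeries.substComp φ F)) :=
  precomp_preserves_star_general 𝔞 n F φ hF0 hFlow hFn hφ0 hφ1
end

section
/- Let S be a commutative ring and 𝔞 an ideal of S such that S is 𝔞-adically complete, and fix an integer n ≥ 1. Let G ∈ S⟦x⟧ have zero constant term and satisfy property (*) with respect to 𝔞 and n, and let ψ ∈ S⟦x⟧ have zero constant term and unit linear coefficient. Then the post-composition ψ∘G satisfies property (*) with respect to 𝔞 and n: its coefficients in degrees 1 ≤ m < n lie in 𝔞 and its degree-n coefficient is a unit of S. -/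
open PowerSeries

/-!
Work modulo `𝔞`, where property (*) says that `G` is divisible by `X ^ n` with `n ≥ 1`,
so for `i ≥ 2` the power `G ^ i` is divisible by `X ^ (2 * n)`; hence in degrees `m ≤ n`
only the linear term of `ψ` contributes, and `ψ ∘ G ≡ ψ₁ G (mod 𝔞, X ^ (n + 1))`.
The degree-`n` coefficient is then a unit modulo `𝔞`, and units lift because `𝔞` lies
in the Jacobson radical.
-/

namespace PowerSeries

theorem map_substComp {R T : Type*} [CommRing R] [CommRing T] (φ : R →+* T) (g f : R⟦X⟧) :
    map φ (substComp g f) = substComp (map φ g) (map φ f) := by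
  ext m
  simp only [substComp, coeff_map, coeff_mk, map_sum, map_mul, ← map_pow]

theorem coeff_substComp_of_X_pow_dvd {R : Type*} [CommRing R] {g f : R⟦X⟧} {n m : ℕ}
    (hn : 1 ≤ n) (hg : X ^ n ∣ g) (hf : coeff 0 f = 0) (hm : m ≤ n) :
    coeff m (substComp g f) = coeff 1 f * coeff m g := by
  rw [substComp, coeff_mk, Finset.sum_eq_single 1, pow_one]
  · intro i _ hi1
    obtain rfl | hi2 : i = 0 ∨ 2 ≤ i := by omega
    · rw [hf, zero_mul]
    · have hgi : X ^ (n * i) ∣ g ^ i := by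
        rw [pow_mul]
        exact pow_dvd_pow_of_dvd hg i
      rw [X_pow_dvd_iff.mp hgi m (by nlinarith), mul_zero]
  · intro h1
    obtain rfl : m = 0 := by simpa using h1
    rw [pow_one, X_pow_dvd_iff.mp hg 0 hn, mul_zero]

theorem X_pow_dvd_map_mk_of_coeff_mem {S : Type*} [CommRing S] {𝔞 : Ideal S}
    {G : S⟦X⟧} {n : ℕ} (hG0 : constantCoeff G = 0)
    (hGlow : ∀ i, 1 ≤ i → i < n → coeff i G ∈ 𝔞) :
    X ^ n ∣ map (Ideal.Quotient.mk 𝔞) G := by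
  refine X_pow_dvd_iff.mpr fun m hm => ?_
  rw [coeff_map, Ideal.Quotient.eq_zero_iff_mem]
  obtain rfl | hm1 := Nat.eq_zero_or_pos m
  · simp [hG0]
  · exact hGlow m hm1 hm

end PowerSeries

theorem IsAdicComplete.isUnit_of_isUnit_mk {S : Type*} [CommRing S] (𝔞 : Ideal S)
    [IsAdicComplete 𝔞 S] {x : S} (hx : IsUnit (Ideal.Quotient.mk 𝔞 x)) : IsUnit x :=
  have := isLocalHom_of_le_jacobson_bot 𝔞 (IsAdicComplete.le_jacobson_bot 𝔞)
  hx.of_map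

/-- Post-composition step of Lemma 3.2: if `G` satisfies property (*) with
respect to `𝔞` and `n`, and `ψ` has zero constant term and unit linear
coefficient, then `ψ ∘ G` satisfies property (*). -/
theorem postcomp_preserves_star {S : Type*} [CommRing S] (𝔞 : Ideal S)
    [IsAdicComplete 𝔞 S] (n : ℕ) (hn : 1 ≤ n)
    (G ψ : PowerSeries S)
    (hG0 : PowerSeries.constantCoeff G = 0)
    (hGlow : ∀ i, 1 ≤ i → i < n → PowerSeries.coeff i G ∈ 𝔞)
    (hGn : IsUnit (PowerSeries.coeff n G))
    (hψ0 : PowerSeries.constantCoeff ψ = 0)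
    (hψ1 : IsUnit (PowerSeries.coeff 1 ψ)) :
    (∀ m, 1 ≤ m → m < n →
        PowerSeries.coeff m (PowerSeries.substComp G ψ) ∈ 𝔞) ∧
      IsUnit (PowerSeries.coeff n (PowerSeries.substComp G ψ)) := by
  have key : ∀ m ≤ n, Ideal.Quotient.mk 𝔞 (coeff m (substComp G ψ)) =
      Ideal.Quotient.mk 𝔞 (coeff 1 ψ * coeff m G) := fun m hm => by
    rw [← coeff_map, map_substComp, map_mul,
      coeff_substComp_of_X_pow_dvd hn (X_pow_dvd_map_mk_of_coeff_mem hG0 hGlow)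
        (by rw [coeff_map, coeff_zero_eq_constantCoeff_apply, hψ0, map_zero]) hm,
      coeff_map, coeff_map]
  refine ⟨fun m hm1 hmn => ?_, IsAdicComplete.isUnit_of_isUnit_mk 𝔞 ?_⟩
  · rw [← Ideal.Quotient.eq_zero_iff_mem, key m hmn.le, Ideal.Quotient.eq_zero_iff_mem]
    exact 𝔞.mul_mem_left _ (hGlow m hm1 hmn)
  · rw [key n le_rfl]
    exact (hψ1.mul hGn).map _
end
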